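/- Let u, v, w : ℝ² → ℝ be smooth functions satisfying the Euler–Lagrange equations w_xx + v_xy = 0, u_xy = 0, u_xx = 2y·w of the singular Lagrangian L = u_x(w_x + v_y) + y·w². Then the hidden first-order constraint y·w_y + w = 0 holds identically, i.e. ∂_y(y·w(x,y)) = 0; consequently for each fixed x the function y ↦ y·w(x,y) is constant in y. -/

import Mathlib

/-- Partial derivative with respect to the first coordinate `x`. -/
noncomputable def pdx (f : ℝ → ℝ → ℝ) : ℝ → ℝ → ℝ :=
  fun x y => deriv (fun s => f s y) x

/-- Partial derivative with respect to the second coordinate `y`. -/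
noncomputable def pdy (f : ℝ → ℝ → ℝ) : ℝ → ℝ → ℝ :=
  fun x y => deriv (fun s => f x s) y

private lemma curveX (x y : ℝ) : HasDerivAt (fun s : ℝ => (s, y)) ((1 : ℝ), (0 : ℝ)) x :=
  (hasDerivAt_id x).prodMk (hasDerivAt_const x y)

private lemma curveY (x y : ℝ) : HasDerivAt (fun t : ℝ => (x, t)) ((0 : ℝ), (1 : ℝ)) y :=
  (hasDerivAt_const y x).prodMk (hasDerivAt_id y)

private lemma pdx_eq_fderiv (f : ℝ → ℝ → ℝ)
    (hf : ContDiff ℝ (⊤ : ℕ∞) (fun p : ℝ × ℝ => f p.1 p.2)) (x y : ℝ) :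
    pdx f x y = fderiv ℝ (fun p : ℝ × ℝ => f p.1 p.2) (x, y) (1, 0) := by
  have h := ((hf.differentiable (by simp) (x, y)).hasFDerivAt).comp_hasDerivAt x (curveX x y)
  simpa [pdx, Function.comp_def] using h.deriv

private lemma pdy_eq_fderiv (f : ℝ → ℝ → ℝ)
    (hf : ContDiff ℝ (⊤ : ℕ∞) (fun p : ℝ × ℝ => f p.1 p.2)) (x y : ℝ) :
    pdy f x y = fderiv ℝ (fun p : ℝ × ℝ => f p.1 p.2) (x, y) (0, 1) := by
  have h := ((hf.differentiable (by simp) (x, y)).hasFDerivAt).comp_hasDerivAt y (curveY x y)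
  simpa [pdy, Function.comp_def] using h.deriv

/-- Clairaut: mixed second partials of a smooth function are equal. -/
private lemma pd_swap (f : ℝ → ℝ → ℝ)
    (hf : ContDiff ℝ (⊤ : ℕ∞) (fun p : ℝ × ℝ => f p.1 p.2)) (x y : ℝ) :
    pdy (pdx f) x y = pdx (pdy f) x y := by
  set F : ℝ × ℝ → ℝ := fun p => f p.1 p.2 with hF
  have hdF : ∀ p, HasFDerivAt F (fderiv ℝ F p) p := fun p =>
    (hf.differentiable (by simp) p).hasFDerivAt
  have hdF' : DifferentiableAt ℝ (fderiv ℝ F) (x, y) :=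
    ((hf.fderiv_right (m := (⊤ : ℕ∞)) (by simp)).differentiable (by simp)) (x, y)
  set f'' := fderiv ℝ (fderiv ℝ F) (x, y) with hf''
  have hsymm := second_derivative_symmetric hdF hdF'.hasFDerivAt
    ((0 : ℝ), (1 : ℝ)) ((1 : ℝ), (0 : ℝ))
  have hA : pdy (pdx f) x y = f'' (0, 1) (1, 0) := by
    have e : (fun t => pdx f x t) = fun t => fderiv ℝ F (x, t) (1, 0) :=
      funext fun t => pdx_eq_fderiv f hf x t
    have h := ((hdF'.hasFDerivAt.clm_apply
      (hasFDerivAt_const ((1 : ℝ), (0 : ℝ)) (x, y)))).comp_hasDerivAt y (curveY x y)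
    have := h.deriv
    simp only [pdy, e]
    simpa [Function.comp_def] using this
  have hB : pdx (pdy f) x y = f'' (1, 0) (0, 1) := by
    have e : (fun s => pdy f s y) = fun s => fderiv ℝ F (s, y) (0, 1) :=
      funext fun s => pdy_eq_fderiv f hf s y
    have h := ((hdF'.hasFDerivAt.clm_apply
      (hasFDerivAt_const ((0 : ℝ), (1 : ℝ)) (x, y)))).comp_hasDerivAt x (curveX x y)
    have := h.deriv
    simp only [pdx, e]
    simpa [Function.comp_def] using this
  rw [hA, hB, hsymm]

/-- Smooth solutions of the Euler–Lagrange equations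
`w_xx + v_xy = 0`, `u_xy = 0`, `u_xx = 2y·w` of the singular Lagrangian
`L = u_x(w_x + v_y) + y·w²` satisfy the hidden first-order constraint
`y·w_y + w = 0`, i.e. `∂_y(y·w(x,y)) = 0`; consequently for each fixed `x`
the function `y ↦ y·w(x,y)` is constant. -/
theorem stmt4 (u v w : ℝ → ℝ → ℝ)
    (hu : ContDiff ℝ (⊤ : ℕ∞) (fun p : ℝ × ℝ => u p.1 p.2))
    (hv : ContDiff ℝ (⊤ : ℕ∞) (fun p : ℝ × ℝ => v p.1 p.2))
    (hw : ContDiff ℝ (⊤ : ℕ∞) (fun p : ℝ × ℝ => w p.1 p.2))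
    (h1 : ∀ x y : ℝ, pdx (pdx w) x y + pdy (pdx v) x y = 0)
    (h2 : ∀ x y : ℝ, pdy (pdx u) x y = 0)
    (h3 : ∀ x y : ℝ, pdx (pdx u) x y = 2 * y * w x y) :
    (∀ x y : ℝ, y * pdy w x y + w x y = 0) ∧
      (∀ x y : ℝ, deriv (fun s => s * w x s) y = 0) ∧
      (∀ x y y' : ℝ, y * w x y = y' * w x y') := by
  -- derivative of w in y as HasDerivAt
  have hwd : ∀ x y : ℝ, HasDerivAt (fun t => w x t) (pdy w x y) y := by
    intro x y
    have hd : DifferentiableAt ℝ (fun t => w x t) y :=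
      (((hw.differentiable (by simp) (x, y)).hasFDerivAt).comp_hasDerivAt y
        (curveY x y)).differentiableAt
    simpa [pdy] using hd.hasDerivAt
  -- smoothness of pdx u as a function of both variables
  have hpdxu : ContDiff ℝ (⊤ : ℕ∞) (fun p : ℝ × ℝ => pdx u p.1 p.2) := by
    have e : (fun p : ℝ × ℝ => pdx u p.1 p.2)
        = fun p : ℝ × ℝ => fderiv ℝ (fun q : ℝ × ℝ => u q.1 q.2) p (1, 0) :=
      funext fun p => pdx_eq_fderiv u hu p.1 p.2
    rw [e]
    exact (hu.fderiv_right (by simp)).clm_apply contDiff_const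
  -- the key identity 2w + 2y w_y = 0
  have key : ∀ x y : ℝ, 2 * w x y + 2 * y * pdy w x y = 0 := by
    intro x y
    have e1 : pdy (pdx (pdx u)) x y = 2 * w x y + 2 * y * pdy w x y := by
      have efun : (fun t => pdx (pdx u) x t) = fun t => 2 * t * w x t :=
        funext fun t => h3 x t
      have hprod : HasDerivAt (fun t => 2 * t * w x t)
          (2 * w x y + 2 * y * pdy w x y) y := by
        have : HasDerivAt (fun t => 2 * t * w x t) (2 * 1 * w x y + 2 * id y * pdy w x y) y :=
          (((hasDerivAt_id y).const_mul (2 : ℝ)).mul (hwd x y))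
        convert this using 1
        simp only [id_eq]
        ring
      simp only [pdy, efun]
      exact hprod.deriv
    have e3 : pdx (pdy (pdx u)) x y = 0 := by
      have efun : (fun s => pdy (pdx u) s y) = fun _ => (0 : ℝ) :=
        funext fun s => h2 s y
      simp [pdx, efun]
    have := pd_swap (pdx u) hpdxu x y
    rw [e1, e3] at this
    exact this
  refine ⟨fun x y => by linarith [key x y], ?_, ?_⟩
  · intro x y
    have hprod : HasDerivAt (fun s => s * w x s) (1 * w x y + y * pdy w x y) y :=
      (hasDerivAt_id y).mul (hwd x y)
    rw [hprod.deriv]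
    have := key x y
    linarith
  · intro x y y'
    have hdiff : Differentiable ℝ (fun s => s * w x s) := fun t =>
      (differentiableAt_id.mul (hwd x t).differentiableAt)
    have hz : ∀ t : ℝ, deriv (fun s => s * w x s) t = 0 := by
      intro t
      have hprod : HasDerivAt (fun s => s * w x s) (1 * w x t + t * pdy w x t) t :=
        (hasDerivAt_id t).mul (hwd x t)
      rw [hprod.deriv]
      have := key x t
      linarith
    exact is_const_of_deriv_eq_zero hdiff hz y y'
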